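/- arXiv:2211.13685 — 4 statements merged into one kernel-verified Lean document; each statement's English description precedes it below -/
import Mathlib

section
/- Let $\{\mu_l\}_{l\ge1}$ satisfy $\mu_l \le c\, l^{-2\nu/d-1}$ with $c>0$, $\nu > d/2$, $d>0$, and let $a > 0$. Define $\gamma(a) = \sum_{l=1}^{\infty} \frac{\mu_l}{\mu_l + a}$. Then there exists a constant $C > 0$ depending only on $c, \nu, d$ such that for all sufficiently small $a > 0$, $\gamma(a) \le C\, a^{-d/(2\nu+d)}$. -/
/-!
With `p = 2ν/d + 1 > 1`, each summand `μ_l/(μ_l + a)` is at most `min(1, (c/a) l^{-p})`.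
Bounding the first `N` summands by `1` and the tail by `∫_N^∞ (c/a) x^{-p} dx` gives
`γ(a) ≤ N + (c/a) N^{1-p}/(p-1)`, and `N = ⌈(c/a)^{1/p}⌉` makes both terms of order
`(c/a)^{1/p} = c^{1/p} a^{-d/(2ν+d)}`.
-/

open Real Finset

lemma tsum_add_nat_add_one_rpow_neg_le {p x : ℝ} (hp : 1 < p) (hx : 0 < x) :
    ∑' i : ℕ, (x + ↑(i + 1)) ^ (-p) ≤ x ^ (1 - p) / (p - 1) := by
  refine tsum_le_of_sum_range_le (fun i => by positivity) fun n => ?_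
  have hanti : AntitoneOn (fun t : ℝ => t ^ (-p)) (Set.Icc x (x + n)) :=
    (antitoneOn_rpow_Ioi_of_exponent_nonpos (by linarith)).mono
      fun t ht => lt_of_lt_of_le hx ht.1
  have hzero : (0 : ℝ) ∉ Set.uIcc x (x + n) := by
    rw [Set.uIcc_of_le (le_add_of_nonneg_right n.cast_nonneg)]
    exact fun h => hx.not_ge h.1
  calc ∑ i ∈ range n, (x + ↑(i + 1)) ^ (-p)
      ≤ ∫ t in x..x + n, t ^ (-p) := hanti.sum_le_integral
    _ = (x ^ (1 - p) - (x + n) ^ (1 - p)) / (p - 1) := by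
        rw [integral_rpow (Or.inr ⟨by linarith, hzero⟩), show -p + 1 = 1 - p by ring,
          ← neg_sub p 1, div_neg, ← neg_div, neg_sub]
    _ ≤ x ^ (1 - p) / (p - 1) := by
        gcongr
        exact sub_le_self _ (by positivity)

lemma tsum_le_add_of_le_one_of_le_mul_rpow {f : ℕ → ℝ} {K p : ℝ} (hp : 1 < p)
    (hf₀ : ∀ l, 0 ≤ f l) (hf₁ : ∀ l, f l ≤ 1) (hfK : ∀ l, f l ≤ K * ((l : ℝ) + 1) ^ (-p))
    {N : ℕ} (hN : 0 < N) :
    ∑' l, f l ≤ N + K * ((N : ℝ) ^ (1 - p) / (p - 1)) := by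
  have hK : 0 ≤ K := by simpa using (hf₀ 0).trans (hfK 0)
  have hmajorant : Summable fun l : ℕ => K * ((l : ℝ) + 1) ^ (-p) := by
    refine Summable.mul_left K ?_
    exact_mod_cast (summable_nat_add_iff 1).mpr (summable_nat_rpow.mpr (by linarith))
  have hsummable : Summable f := hmajorant.of_nonneg_of_le hf₀ hfK
  rw [← hsummable.sum_add_tsum_nat_add N]
  gcongr
  · calc ∑ l ∈ range N, f l ≤ ∑ _l ∈ range N, (1 : ℝ) := sum_le_sum fun l _ => hf₁ l
      _ = N := by simp
  · calc ∑' i, f (i + N) ≤ ∑' i, K * (((i + N : ℕ) : ℝ) + 1) ^ (-p) :=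
          Summable.tsum_le_tsum (fun i => hfK (i + N))
            ((summable_nat_add_iff N).mpr hsummable) ((summable_nat_add_iff N).mpr hmajorant)
      _ = K * ∑' i : ℕ, ((N : ℝ) + ↑(i + 1)) ^ (-p) := by
          rw [← tsum_mul_left]
          congr! 4
          push_cast
          ring
      _ ≤ K * ((N : ℝ) ^ (1 - p) / (p - 1)) := by
          gcongr
          exact tsum_add_nat_add_one_rpow_neg_le hp (by exact_mod_cast hN)

lemma tsum_le_rpow_inv_of_le_one_of_le_mul_rpow {f : ℕ → ℝ} {K p : ℝ} (hp : 1 < p) (hK : 1 ≤ K)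
    (hf₀ : ∀ l, 0 ≤ f l) (hf₁ : ∀ l, f l ≤ 1) (hfK : ∀ l, f l ≤ K * ((l : ℝ) + 1) ^ (-p)) :
    ∑' l, f l ≤ (2 + 1 / (p - 1)) * K ^ (1 / p) := by
  set B := K ^ (1 / p)
  have hK₀ : 0 < K := by linarith
  have hB : 1 ≤ B := one_le_rpow hK (by positivity)
  have hKB : K * B ^ (1 - p) = B := by
    calc K * B ^ (1 - p) = K ^ (1 + 1 / p * (1 - p)) := by
          rw [rpow_add hK₀, rpow_one, rpow_mul hK₀.le]
      _ = B := by congr 1; field_simp; ring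
  have hN₀ : 0 < ⌈B⌉₊ := Nat.ceil_pos.mpr (by linarith)
  have hBN : B ≤ ⌈B⌉₊ := Nat.le_ceil B
  have hNB : (⌈B⌉₊ : ℝ) ≤ 2 * B := by linarith [Nat.ceil_lt_add_one (by linarith : 0 ≤ B)]
  calc ∑' l, f l ≤ ⌈B⌉₊ + K * ((⌈B⌉₊ : ℝ) ^ (1 - p) / (p - 1)) :=
        tsum_le_add_of_le_one_of_le_mul_rpow hp hf₀ hf₁ hfK hN₀
    _ ≤ 2 * B + K * (B ^ (1 - p) / (p - 1)) := by
        gcongr ?_ + K * (?_ / _)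
        exact rpow_le_rpow_of_nonpos (by linarith) hBN (by linarith)
    _ = (2 + 1 / (p - 1)) * B := by
        rw [← mul_div_assoc, hKB]
        ring

/-- Effective dimensionality bound for polynomially decaying eigenvalues:
`γ(a) = ∑ μ_l/(μ_l + a) ≤ C a^(-d/(2ν+d))` for all sufficiently small `a > 0`. -/
theorem stmt_2 (μ : ℕ → ℝ) (c ν d : ℝ)
    (hc : 0 < c) (hd : 0 < d) (hν : d / 2 < ν)
    (hnonneg : ∀ l : ℕ, 1 ≤ l → 0 ≤ μ l)
    (hbound : ∀ l : ℕ, 1 ≤ l → μ l ≤ c * (l : ℝ) ^ (-(2 * ν / d + 1))) :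
    ∃ C > (0 : ℝ), ∃ a0 > (0 : ℝ), ∀ a : ℝ, 0 < a → a ≤ a0 →
      ∑' l : ℕ, μ (l + 1) / (μ (l + 1) + a) ≤ C * a ^ (-(d / (2 * ν + d))) := by
  set p := 2 * ν / d + 1 with hp_def
  have hp : 1 < p := by
    have : 1 < 2 * ν / d := by rw [lt_div_iff₀ hd]; linarith
    linarith
  have hexp : d / (2 * ν + d) = 1 / p := by
    rw [hp_def]
    field_simp
  refine ⟨(2 + 1 / (p - 1)) * c ^ (1 / p), by positivity, c, hc, fun a ha hac => ?_⟩
  have hμ (l : ℕ) : 0 ≤ μ (l + 1) := hnonneg _ (Nat.le_add_left 1 l)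
  calc ∑' l : ℕ, μ (l + 1) / (μ (l + 1) + a) ≤ (2 + 1 / (p - 1)) * (c / a) ^ (1 / p) := by
        refine tsum_le_rpow_inv_of_le_one_of_le_mul_rpow hp ((one_le_div ha).mpr hac)
          (fun l => by have := hμ l; positivity)
          (fun l => div_le_one_of_le₀ (by linarith) (by linarith [hμ l])) fun l => ?_
        calc μ (l + 1) / (μ (l + 1) + a) ≤ μ (l + 1) / a :=
              div_le_div_of_nonneg_left (hμ l) ha (by linarith [hμ l])
          _ ≤ c * ((l : ℝ) + 1) ^ (-p) / a := by
              gcongr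
              exact_mod_cast hbound (l + 1) (Nat.le_add_left 1 l)
          _ = c / a * ((l : ℝ) + 1) ^ (-p) := by ring
    _ = (2 + 1 / (p - 1)) * c ^ (1 / p) * a ^ (-(d / (2 * ν + d))) := by
        rw [div_rpow hc.le ha.le, hexp, rpow_neg ha.le, one_div p]
        ring
end

section
/- Let $f(x) = \sum_{b=1}^{\infty} \theta_b \phi_b(x)$ and $\eta(x) = \sum_{b=1}^{\infty} \delta_b \phi_b(x)$ be functions in an RKHS with positive eigenvalues $\{\mu_b\}$, and suppose there exist points $x_1,\ldots,x_m$ and positive weights $w_1,\ldots,w_m$ such that for all $b$: $\theta_b = \mu_b \sum_{j=1}^m w_j \eta(x_j)\phi_b(x_j) + \delta_b$, with all relevant series converging absolutely. Then $\|\eta\|_{\mathbb{H}} \le \|f\|_{\mathbb{H}}$, where $\|g\|_{\mathbb{H}}^2 = \sum_b g_b^2/\mu_b$ for $g = \sum_b g_b \phi_b$. -/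
/-- The kriging "bias" function `η` has smaller RKHS norm than the regression
function `f` it approximates: if `θ_b = μ_b ∑_j w_j η(x_j) φ_b(x_j) + δ_b`, then
`∑ δ_b²/μ_b ≤ ∑ θ_b²/μ_b`, i.e. `‖η‖_ℍ ≤ ‖f‖_ℍ`. -/
theorem stmt_9 {X : Type*} (m : ℕ) (x : Fin m → X) (w e : Fin m → ℝ)
    (φ : ℕ → X → ℝ) (θ δ μ : ℕ → ℝ)
    (hμ : ∀ b, 0 < μ b) (hw : ∀ j, 0 < w j)
    (hη : ∀ j, HasSum (fun b => δ b * φ b (x j)) (e j))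
    (hθ : ∀ b, θ b = μ b * (∑ j, w j * e j * φ b (x j)) + δ b)
    (hSδ : Summable fun b => δ b ^ 2 / μ b)
    (hSθ : Summable fun b => θ b ^ 2 / μ b)
    (hSS : Summable fun b => μ b * (∑ j, w j * e j * φ b (x j)) ^ 2) :
    ∑' b : ℕ, δ b ^ 2 / μ b ≤ ∑' b : ℕ, θ b ^ 2 / μ b := by
  set S : ℕ → ℝ := fun b => ∑ j, w j * e j * φ b (x j) with hS
  -- cross term sums to C = ∑ j, w j * e j * e j
  set C : ℝ := ∑ j, w j * e j * e j with hCdef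
  have hC : HasSum (fun b => S b * δ b) C := by
    have h1 : ∀ j : Fin m, HasSum (fun b => w j * e j * (δ b * φ b (x j)))
        (w j * e j * e j) := fun j => (hη j).mul_left _
    have h2 := hasSum_sum (f := fun (j : Fin m) (b : ℕ) => w j * e j * (δ b * φ b (x j)))
      (s := Finset.univ) (a := fun j => w j * e j * e j) (fun j _ => h1 j)
    convert h2 using 1
    funext b
    simp only [hS, Finset.sum_mul]
    exact Finset.sum_congr rfl fun j _ => by ring
  have hT : HasSum (fun b => μ b * S b ^ 2) (∑' b, μ b * S b ^ 2) := hSS.hasSum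
  have hA : HasSum (fun b => δ b ^ 2 / μ b) (∑' b, δ b ^ 2 / μ b) := hSδ.hasSum
  have hEq : (fun b => θ b ^ 2 / μ b)
      = fun b => δ b ^ 2 / μ b + (μ b * S b ^ 2 + 2 * (S b * δ b)) := by
    funext b
    rw [hθ b]
    have h := (hμ b).ne'
    field_simp
    ring
  have hθsum : HasSum (fun b => θ b ^ 2 / μ b)
      ((∑' b, δ b ^ 2 / μ b) + ((∑' b, μ b * S b ^ 2) + 2 * C)) := by
    rw [hEq]
    exact hA.add (hT.add (hC.mul_left 2))
  rw [hθsum.tsum_eq]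
  have hTnn : 0 ≤ ∑' b, μ b * S b ^ 2 :=
    tsum_nonneg fun b => mul_nonneg (hμ b).le (sq_nonneg _)
  have hCnn : 0 ≤ C := Finset.sum_nonneg fun j _ => by
    nlinarith [(hw j).le, sq_nonneg (e j)]
  linarith
end

section
/- Let $V \ge 0$ be a random variable and $\delta_0 > 0$. Suppose there exist $w_1, w_2, R > 0$ such that $\mathbb{P}(V \ge tR) \le w_1 \exp(-w_2 t)$ for all $t > 0$. Then $\mathbb{E}\left[\exp\left(-\frac{\delta_0^2}{4V}\right)\right] \le w_1 \int_0^{\infty} \exp\left(-v - \frac{w_2 \delta_0^2}{4R} \cdot \frac{1}{v}\right) dv = w_1 \sqrt{\frac{w_2 \delta_0^2}{R}}\, K_1\left(\sqrt{\frac{w_2 \delta_0^2}{R}}\right)$, where $K_1$ is the modified Bessel function of the second kind of order $1$. -/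
open MeasureTheory

/-- The modified Bessel function of the second kind of order 1, via its integral
representation `K₁(x) = ∫₀^∞ exp(-x cosh t) cosh t dt`. -/
noncomputable def besselK1 (x : ℝ) : ℝ :=
  ∫ t in Set.Ioi (0 : ℝ), Real.exp (-x * Real.cosh t) * Real.cosh t

section Aux

open Set Real

lemma exp_neg_image_Ioi : (fun v : ℝ => Real.exp (-v)) '' Set.Ioi 0 = Set.Ioo 0 1 := by
  ext u
  constructor
  · rintro ⟨v, hv, rfl⟩
    exact ⟨Real.exp_pos _, Real.exp_lt_one_iff.mpr (by simpa using hv)⟩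
  · rintro ⟨h0, h1⟩
    exact ⟨-Real.log u, by simpa using neg_pos.mpr (Real.log_neg h0 h1) |>.trans_le le_rfl,
      by simp [Real.exp_log h0]⟩

lemma hasDeriv_exp_neg (x : ℝ) (s : Set ℝ) :
    HasDerivWithinAt (fun v : ℝ => Real.exp (-v)) (-Real.exp (-x)) s x := by
  have h := ((Real.hasDerivAt_exp (-x)).comp x (hasDerivAt_neg x)).hasDerivWithinAt (s := s)
  simpa [Function.comp_def, mul_neg_one] using h

lemma integral_Ioo01_eq (q : ℝ → ℝ) :
    ∫ u in Set.Ioo (0:ℝ) 1, q u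
      = ∫ v in Set.Ioi (0:ℝ), Real.exp (-v) * q (Real.exp (-v)) := by
  rw [← exp_neg_image_Ioi,
    integral_image_eq_integral_abs_deriv_smul measurableSet_Ioi
      (fun x _ => hasDeriv_exp_neg x _)
      ((Real.exp_injective.comp neg_injective).injOn) q]
  simp [abs_of_pos (Real.exp_pos _), smul_eq_mul]

lemma image_smul_exp (s : ℝ) (hs : 0 < s) :
    (fun t : ℝ => s * Real.exp t) '' Set.univ = Set.Ioi 0 := by
  rw [Set.image_univ]
  ext u
  simp only [Set.mem_range, Set.mem_Ioi]
  constructor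
  · rintro ⟨t, rfl⟩; positivity
  · intro hu
    refine ⟨Real.log (u / s), ?_⟩
    rw [Real.exp_log (by positivity)]
    field_simp

lemma integral_Ioi0_eq (s : ℝ) (hs : 0 < s) (q : ℝ → ℝ) :
    ∫ v in Set.Ioi (0:ℝ), q v = ∫ t : ℝ, s * Real.exp t * q (s * Real.exp t) := by
  rw [← image_smul_exp s hs,
    integral_image_eq_integral_abs_deriv_smul MeasurableSet.univ
      (fun x _ => ((Real.hasDerivAt_exp x).const_mul s).hasDerivWithinAt)
      (((mul_right_injective₀ hs.ne').comp Real.exp_injective).injOn) q,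
    Measure.restrict_univ]
  congr 1
  ext t
  rw [abs_of_pos (by positivity), smul_eq_mul]

lemma exp_sub_div_integrableOn (a : ℝ) (ha : 0 ≤ a) :
    IntegrableOn (fun v : ℝ => Real.exp (-v - a / v)) (Set.Ioi 0) := by
  apply Integrable.mono (exp_neg_integrableOn_Ioi 0 one_pos)
  · exact (((measurable_id.neg).sub (measurable_const.div measurable_id)).exp).aestronglyMeasurable
  · rw [ae_restrict_iff' measurableSet_Ioi]
    refine Filter.Eventually.of_forall (fun v hv => ?_)
    simp only [Real.norm_eq_abs, Real.abs_exp]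
    apply Real.exp_le_exp.mpr
    have : 0 ≤ a / v := div_nonneg ha (le_of_lt hv)
    linarith

lemma gig_eq (a : ℝ) (ha : 0 < a) :
    ∫ v in Set.Ioi (0:ℝ), Real.exp (-v - a / v)
      = 2 * Real.sqrt a * ∫ t in Set.Ioi (0:ℝ),
          Real.exp (-(2 * Real.sqrt a) * Real.cosh t) * Real.cosh t := by
  set s := Real.sqrt a with hsdef
  have hs : 0 < s := Real.sqrt_pos.mpr ha
  have hss : s * s = a := Real.mul_self_sqrt ha.le
  set h : ℝ → ℝ := fun t => s * Real.exp t * Real.exp (-(s * Real.exp t) - s * Real.exp (-t))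
    with hh
  have harg : ∀ t : ℝ, a / (s * Real.exp t) = s * Real.exp (-t) := by
    intro t
    rw [Real.exp_neg, div_eq_iff (by positivity : s * Real.exp t ≠ 0), ← hss]
    field_simp
  have h1 : ∫ v in Set.Ioi (0:ℝ), Real.exp (-v - a / v) = ∫ t : ℝ, h t := by
    rw [integral_Ioi0_eq s hs]
    congr 1
    ext t
    rw [hh, harg t]
  have h_int : Integrable h := by
    have := (integrableOn_image_iff_integrableOn_abs_deriv_smul MeasurableSet.univ
      (fun x (_ : x ∈ Set.univ) => ((Real.hasDerivAt_exp x).const_mul s).hasDerivWithinAt)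
      (((mul_right_injective₀ hs.ne').comp Real.exp_injective).injOn)
      (fun v => Real.exp (-v - a / v))).mp
      (by rw [image_smul_exp s hs]; exact exp_sub_div_integrableOn a ha.le)
    rw [← integrableOn_univ]
    apply this.congr_fun ?_ MeasurableSet.univ
    intro t _
    show |s * Real.exp t| • Real.exp (-(s * Real.exp t) - a / (s * Real.exp t)) = h t
    rw [smul_eq_mul, abs_of_pos (by positivity : (0:ℝ) < s * Real.exp t), harg t]
  have hneg : ∀ t : ℝ, h (-t) = s * Real.exp (-t) *
      Real.exp (-(s * Real.exp t) - s * Real.exp (-t)) := by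
    intro t
    rw [hh]
    simp only [neg_neg]
    ring_nf
  have h2 : 2 * s * ∫ t in Set.Ioi (0:ℝ),
      Real.exp (-(2 * s) * Real.cosh t) * Real.cosh t
      = ∫ t in Set.Ioi (0:ℝ), (h t + h (-t)) := by
    rw [← integral_const_mul]
    apply setIntegral_congr_fun measurableSet_Ioi
    intro t _
    show 2 * s * (Real.exp (-(2 * s) * Real.cosh t) * Real.cosh t) = h t + h (-t)
    rw [hneg t]
    show _ = s * Real.exp t * Real.exp (-(s * Real.exp t) - s * Real.exp (-t)) + _
    rw [Real.cosh_eq]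
    ring_nf
  have h3 : ∫ t in Set.Ioi (0:ℝ), (h t + h (-t))
      = (∫ t in Set.Ioi (0:ℝ), h t) + ∫ t in Set.Ioi (0:ℝ), h (-t) :=
    integral_add h_int.integrableOn (h_int.comp_neg).integrableOn
  have h4 : (∫ t in Set.Ioi (0:ℝ), h (-t)) = ∫ t in Set.Iic (0:ℝ), h t := by
    simpa using integral_comp_neg_Ioi 0 h
  rw [h1, h2, h3, h4, add_comm, intervalIntegral.integral_Iic_add_Ioi h_int.integrableOn h_int.integrableOn]

end Aux

/-- Layer-cake bound for `E[exp(-δ₀²/(4V))]` under an exponential tail condition on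
`V`, expressed via a generalized inverse Gaussian integral equal to
`√(w₂δ₀²/R) K₁(√(w₂δ₀²/R))`. (The integrand is `0` where `V = 0`, matching the
convention `exp(-∞) = 0`.) -/
theorem stmt_15 {Ω : Type*} [MeasurableSpace Ω] (P : Measure Ω) [IsProbabilityMeasure P]
    (V : Ω → ℝ) (hV : Measurable V) (hVnn : ∀ ω, 0 ≤ V ω)
    (δ0 w1 w2 R : ℝ) (hδ0 : 0 < δ0) (hw1 : 0 < w1) (hw2 : 0 < w2) (hR : 0 < R)
    (htail : ∀ t : ℝ, 0 < t →
      P {ω | t * R ≤ V ω} ≤ ENNReal.ofReal (w1 * Real.exp (-w2 * t))) :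
    (∫ ω, (if V ω = 0 then 0 else Real.exp (-δ0 ^ 2 / (4 * V ω))) ∂P ≤
        w1 * ∫ v in Set.Ioi (0 : ℝ), Real.exp (-v - (w2 * δ0 ^ 2 / (4 * R)) / v)) ∧
    w1 * (∫ v in Set.Ioi (0 : ℝ), Real.exp (-v - (w2 * δ0 ^ 2 / (4 * R)) / v)) =
      w1 * Real.sqrt (w2 * δ0 ^ 2 / R) * besselK1 (Real.sqrt (w2 * δ0 ^ 2 / R)) := by
  set a : ℝ := w2 * δ0 ^ 2 / (4 * R) with ha_def
  have ha : 0 < a := by positivity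
  constructor
  · -- part 1: layer cake bound
    set g0 : Ω → ℝ := fun ω => if V ω = 0 then 0 else Real.exp (-δ0 ^ 2 / (4 * V ω)) with hg0
    have hg0_meas : Measurable g0 :=
      Measurable.ite (hV (measurableSet_singleton 0)) measurable_const
        (Real.measurable_exp.comp (measurable_const.div (measurable_const.mul hV)))
    have hg0_nn : ∀ ω, 0 ≤ g0 ω := by
      intro ω; rw [hg0]; dsimp only
      split
      · exact le_rfl
      · exact (Real.exp_pos _).le
    have hg0_lt1 : ∀ ω, g0 ω < 1 := by
      intro ω; rw [hg0]; dsimp only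
      split
      · norm_num
      · rename_i hne
        have hVpos : 0 < V ω := lt_of_le_of_ne (hVnn ω) (Ne.symm hne)
        apply Real.exp_lt_one_iff.mpr
        apply div_neg_of_neg_of_pos (neg_lt_zero.mpr (by positivity)) (by linarith)
    have hg0_int : Integrable g0 P :=
      ⟨hg0_meas.aestronglyMeasurable,
        HasFiniteIntegral.of_bounded (C := 1) (Filter.Eventually.of_forall (fun ω => by
          rw [Real.norm_eq_abs, abs_of_nonneg (hg0_nn ω)]; exact (hg0_lt1 ω).le))⟩
    rw [hg0_int.integral_eq_integral_Ioc_meas_le (Filter.Eventually.of_forall hg0_nn)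
      (Filter.Eventually.of_forall (fun ω => (hg0_lt1 ω).le))]
    set b : ℝ → ℝ := fun u => w1 * Real.exp (-a / (-Real.log u)) with hb
    have hb_meas : Measurable b :=
      (Real.measurable_exp.comp (measurable_const.div Real.measurable_log.neg)).const_mul w1
    have hb_int : IntegrableOn b (Set.Ioc 0 1) := by
      haveI : IsFiniteMeasure (volume.restrict (Set.Ioc (0:ℝ) 1)) :=
        ⟨by rw [Measure.restrict_apply_univ]; exact measure_Ioc_lt_top⟩
      refine ⟨hb_meas.aestronglyMeasurable, HasFiniteIntegral.of_bounded (C := w1) ?_⟩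
      rw [ae_restrict_iff' measurableSet_Ioc]
      refine Filter.Eventually.of_forall (fun u hu => ?_)
      have hlog : Real.log u ≤ 0 := Real.log_nonpos hu.1.le hu.2
      have hexp : Real.exp (-a / (-Real.log u)) ≤ 1 := by
        apply Real.exp_le_one_iff.mpr
        apply div_nonpos_of_nonpos_of_nonneg (by linarith) (by linarith)
      show ‖b u‖ ≤ w1
      rw [hb]
      dsimp only
      rw [Real.norm_eq_abs, abs_of_nonneg (by positivity)]
      nlinarith [Real.exp_pos (-a / (-Real.log u)), hexp]
    have hbound : ∀ u ∈ Set.Ioc (0:ℝ) 1, (P {ω | u ≤ g0 ω}).toReal ≤ b u := by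
      intro u hu
      rcases eq_or_lt_of_le hu.2 with h1 | h1
      · -- u = 1 : the set is empty
        have : {ω | u ≤ g0 ω} = ∅ := by
          ext ω
          simp only [Set.mem_setOf_eq, Set.mem_empty_iff_false, iff_false, not_le]
          exact (hg0_lt1 ω).trans_le h1.ge
        rw [this]
        simp only [measure_empty, ENNReal.toReal_zero]
        positivity
      · -- 0 < u < 1
        have hL : 0 < -Real.log u := neg_pos.mpr (Real.log_neg hu.1 h1)
        set L : ℝ := -Real.log u with hLdef
        set t : ℝ := δ0 ^ 2 / (4 * R * L) with htdef
        have ht : 0 < t := by positivity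
        have hsub : {ω | u ≤ g0 ω} ⊆ {ω | t * R ≤ V ω} := by
          intro ω hω
          simp only [Set.mem_setOf_eq] at hω ⊢
          rw [hg0] at hω
          by_cases hV0 : V ω = 0
          · simp only [hV0, if_pos] at hω
            exact absurd (hu.1.trans_le hω) (lt_irrefl 0)
          · simp only [hV0, if_neg, if_false] at hω
            have hVpos : 0 < V ω := lt_of_le_of_ne (hVnn ω) (Ne.symm hV0)
            have hlog : Real.log u ≤ -δ0 ^ 2 / (4 * V ω) :=
              (Real.log_le_iff_le_exp hu.1).mpr hω
            have hdiv : δ0 ^ 2 / (4 * V ω) ≤ L := by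
              rw [hLdef]
              have := neg_le_neg hlog
              rw [neg_div] at this
              simpa using this
            have h2 : δ0 ^ 2 ≤ L * (4 * V ω) := (div_le_iff₀ (by positivity)).mp hdiv
            have h3 : t * R = δ0 ^ 2 / (4 * L) := by
              rw [htdef]; field_simp
            rw [h3]
            rw [div_le_iff₀ (by positivity)]
            nlinarith
        have hP : P {ω | u ≤ g0 ω} ≤ ENNReal.ofReal (w1 * Real.exp (-w2 * t)) :=
          le_trans (measure_mono hsub) (htail t ht)
        have heq : w1 * Real.exp (-w2 * t) = b u := by
          have hL' : L ≠ 0 := ne_of_gt hL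
          have hR' : R ≠ 0 := ne_of_gt hR
          have harg2 : -w2 * t = -a / -Real.log u := by
            rw [htdef, ha_def, ← hLdef]
            field_simp
          rw [hb]
          dsimp only
          rw [harg2]
        rw [← heq]
        exact ENNReal.toReal_le_of_le_ofReal (by positivity) hP
    calc ∫ u in Set.Ioc (0:ℝ) 1, (P {ω | u ≤ g0 ω}).toReal
        ≤ ∫ u in Set.Ioc (0:ℝ) 1, b u := by
          apply integral_mono_of_nonneg
          · exact Filter.Eventually.of_forall (fun u => ENNReal.toReal_nonneg)
          · exact hb_int
          · rw [Filter.EventuallyLE, ae_restrict_iff' measurableSet_Ioc]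
            exact Filter.Eventually.of_forall hbound
      _ = ∫ u in Set.Ioo (0:ℝ) 1, b u := integral_Ioc_eq_integral_Ioo
      _ = w1 * ∫ u in Set.Ioo (0:ℝ) 1, Real.exp (-a / (-Real.log u)) := by
          rw [hb, integral_const_mul]
      _ = w1 * ∫ v in Set.Ioi (0:ℝ), Real.exp (-v) *
            Real.exp (-a / (-Real.log (Real.exp (-v)))) := by
          rw [integral_Ioo01_eq]
      _ = w1 * ∫ v in Set.Ioi (0:ℝ), Real.exp (-v - a / v) := by
          congr 1
          apply setIntegral_congr_fun measurableSet_Ioi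
          intro v _
          simp only [Real.log_exp, neg_neg, ← Real.exp_add, neg_div]
          ring_nf
  · -- part 2: the Bessel identity
    have h4a : w2 * δ0 ^ 2 / R = 4 * a := by rw [ha_def]; field_simp
    have hsqrt : Real.sqrt (w2 * δ0 ^ 2 / R) = 2 * Real.sqrt a := by
      rw [h4a, show (4:ℝ) * a = 2 ^ 2 * a by ring, Real.sqrt_mul (by positivity),
        Real.sqrt_sq (by norm_num)]
    rw [hsqrt, gig_eq a ha, besselK1]
    ring
end

section
/- Let $V \ge 0$ be a random variable with $\mathbb{P}(V \ge tR) \le w_1 e^{-w_2 t}$ for all $t > 0$, where $w_1, w_2, R > 0$, and let $\delta_0 > 0$. Then there exist a constant $C > 0$ (depending only on $w_1, w_2, \delta_0$) and $R_0 > 0$ such that for all $0 < R \le R_0$: $\mathbb{E}\left[\exp\left(-\frac{\delta_0^2}{4V}\right)\right] \le C \exp\left(-\frac{1}{2} w_2^{1/2} \delta_0 R^{-1/2}\right)$. -/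
/-!
Split the expectation at the level `V = t R`. Above it the integrand is at most `1`, and
that event has probability at most `w₁ e^{-w₂ t}`; below it the integrand is at most
`exp(-δ₀² / (4 t R))`. The two exponents agree when `t = δ₀ / (2 √(w₂ R))`, and then both
equal `√w₂ δ₀ / (2 √R)`, so one may take `C = w₁ + 1` for every `R > 0`.
-/

open MeasureTheory Real

theorem integral_le_measureReal_add {Ω : Type*} [MeasurableSpace Ω] {P : Measure Ω}
    [IsProbabilityMeasure P] {f : Ω → ℝ} {A : Set Ω} {ε : ℝ} (hA : MeasurableSet A)
    (hf : Integrable f P) (hf_one : ∀ ω ∈ A, f ω ≤ 1) (hf_eps : ∀ ω ∉ A, f ω ≤ ε)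
    (hε : 0 ≤ ε) :
    ∫ ω, f ω ∂P ≤ P.real A + ε := by
  have hind : Integrable (A.indicator fun _ => (1 : ℝ)) P := (integrable_const 1).indicator hA
  have hle : ∀ ω, f ω ≤ A.indicator (fun _ => (1 : ℝ)) ω + ε := by
    intro ω
    by_cases hω : ω ∈ A
    · simp only [Set.indicator_of_mem hω]
      linarith [hf_one ω hω]
    · simpa only [Set.indicator_of_notMem hω, zero_add] using hf_eps ω hω
  calc ∫ ω, f ω ∂P ≤ ∫ ω, (A.indicator (fun _ => (1 : ℝ)) ω + ε) ∂P :=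
        integral_mono hf (hind.add (integrable_const ε)) hle
    _ = P.real A + ε := by
        rw [integral_add hind (integrable_const ε), integral_indicator_const _ hA,
          integral_const, probReal_univ, smul_eq_mul, smul_eq_mul, mul_one, one_mul]

section ExpNegDiv

variable {a b x : ℝ}

theorem ite_exp_neg_div_nonneg :
    0 ≤ if x = 0 then 0 else exp (-a / (b * x)) := by
  split_ifs <;> positivity

theorem ite_exp_neg_div_le_one (ha : 0 ≤ a) (hb : 0 ≤ b) (hx : 0 ≤ x) :
    (if x = 0 then 0 else exp (-a / (b * x))) ≤ 1 := by
  split_ifs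
  · exact zero_le_one
  · exact exp_le_one_iff.mpr (div_nonpos_of_nonpos_of_nonneg (neg_nonpos.mpr ha) (by positivity))

theorem ite_exp_neg_div_le_of_lt {s : ℝ} (ha : 0 ≤ a) (hb : 0 < b) (hx : 0 ≤ x) (hxs : x < s) :
    (if x = 0 then 0 else exp (-a / (b * x))) ≤ exp (-a / (b * s)) := by
  split_ifs with h0
  · positivity
  · have hx' : 0 < x := hx.lt_of_ne (Ne.symm h0)
    rw [exp_le_exp, neg_div, neg_div, neg_le_neg_iff]
    gcongr

end ExpNegDiv

theorem measureReal_le_of_tail_bound {Ω : Type*} [MeasurableSpace Ω] {P : Measure Ω}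
    {V : Ω → ℝ} {R w1 w2 t : ℝ} (hw1 : 0 ≤ w1) (ht : 0 < t)
    (htail : ∀ t : ℝ, 0 < t → P {ω | t * R ≤ V ω} ≤ ENNReal.ofReal (w1 * exp (-w2 * t))) :
    P.real {ω | t * R ≤ V ω} ≤ w1 * exp (-(w2 * t)) := by
  rw [← neg_mul]
  exact ENNReal.toReal_le_of_le_ofReal (by positivity) (htail t ht)

theorem sq_div_four_mul_eq_sqrt_mul_div {w2 δ0 R : ℝ} (hw2 : 0 < w2) (hδ0 : 0 < δ0) (hR : 0 < R) :
    δ0 ^ 2 / (4 * ((sqrt w2 * δ0 / (2 * sqrt R)) / w2 * R)) =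
      sqrt w2 * δ0 / (2 * sqrt R) := by
  have hsw : 0 < sqrt w2 := sqrt_pos.mpr hw2
  have hsR : 0 < sqrt R := sqrt_pos.mpr hR
  rw [div_eq_iff (by positivity)]
  field_simp
  rw [sq_sqrt hw2.le, sq_sqrt hR.le]
  ring

/-- Exponentially small bound for the integrated probability of false selection:
there are constants `C > 0` and `R₀ > 0` depending only on `w₁, w₂, δ₀` such that
for all `0 < R ≤ R₀` and any nonnegative random variable `V` with
`P(V ≥ tR) ≤ w₁ e^{-w₂ t}` for all `t > 0`,
`E[exp(-δ₀²/(4V))] ≤ C exp(-½ √w₂ δ₀ / √R)`. (The integrand is `0` where `V = 0`.) -/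
theorem stmt_16 (w1 w2 δ0 : ℝ) (hw1 : 0 < w1) (hw2 : 0 < w2) (hδ0 : 0 < δ0) :
    ∃ C > (0 : ℝ), ∃ R0 > (0 : ℝ), ∀ R : ℝ, 0 < R → R ≤ R0 →
      ∀ (Ω : Type) (_ : MeasurableSpace Ω) (P : Measure Ω), IsProbabilityMeasure P →
        ∀ V : Ω → ℝ, Measurable V → (∀ ω, 0 ≤ V ω) →
          (∀ t : ℝ, 0 < t →
            P {ω | t * R ≤ V ω} ≤ ENNReal.ofReal (w1 * Real.exp (-w2 * t))) →
          ∫ ω, (if V ω = 0 then 0 else Real.exp (-δ0 ^ 2 / (4 * V ω))) ∂P ≤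
            C * Real.exp (-(Real.sqrt w2 * δ0 / (2 * Real.sqrt R))) := by
  refine ⟨w1 + 1, by positivity, 1, one_pos, fun R hR _ Ω _ P _ V hV hV0 htail => ?_⟩
  set E := sqrt w2 * δ0 / (2 * sqrt R)
  set t := E / w2
  have hE : 0 < E := by have := sqrt_pos.mpr hw2; have := sqrt_pos.mpr hR; positivity
  have hwt : w2 * t = E := mul_div_cancel₀ E hw2.ne'
  have hδt : δ0 ^ 2 / (4 * (t * R)) = E := sq_div_four_mul_eq_sqrt_mul_div hw2 hδ0 hR
  have hmeas : Measurable fun ω => if V ω = 0 then 0 else exp (-δ0 ^ 2 / (4 * V ω)) :=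
    Measurable.ite (hV (measurableSet_singleton 0)) measurable_const (by fun_prop)
  have hint : Integrable (fun ω => if V ω = 0 then 0 else exp (-δ0 ^ 2 / (4 * V ω))) P :=
    Integrable.of_bound hmeas.aestronglyMeasurable 1 <| .of_forall fun ω => by
      rw [norm_of_nonneg ite_exp_neg_div_nonneg]
      exact ite_exp_neg_div_le_one (sq_nonneg δ0) zero_le_four (hV0 ω)
  calc ∫ ω, (if V ω = 0 then 0 else exp (-δ0 ^ 2 / (4 * V ω))) ∂P
      ≤ P.real {ω | t * R ≤ V ω} + exp (-E) := by
        refine integral_le_measureReal_add (measurableSet_le measurable_const hV) hint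
          (fun ω _ => ite_exp_neg_div_le_one (sq_nonneg δ0) zero_le_four (hV0 ω))
          (fun ω hω => ?_) (exp_nonneg _)
        rw [← hδt, ← neg_div]
        exact ite_exp_neg_div_le_of_lt (sq_nonneg δ0) four_pos (hV0 ω) (not_le.mp hω)
    _ ≤ w1 * exp (-E) + exp (-E) := by
        rw [← hwt]
        gcongr
        exact measureReal_le_of_tail_bound hw1.le (by positivity) htail
    _ = (w1 + 1) * exp (-E) := by ring
end
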